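/- arXiv:2502.05876 — 2 statements merged into one kernel-verified Lean document; each statement's English description precedes it below -/
import Mathlib

section
/- Let 0 < α < 1, η(β) = √2 · arctanh(√(1 - e^{-β})), Λ(β) = (1-α)^{-2} e^{-β} η(β)², and let β₁ be the unique positive root of √(1-e^{-β}) arctanh(√(1-e^{-β})) = 1. Then Λ'(β) > 0 for 0 < β < β₁, Λ'(β₁) = 0, and Λ'(β) < 0 for β > β₁. -/
/-!
With `s = √(1 - e^{-β}) ∈ (0, 1)` we have `1 - s² = e^{-β}`, so `d/dβ artanh s = 1 / (2 s)` and
`Λ'(β) = 2 (1 - α)⁻² e^{-β} (artanh s / s) (1 - s · artanh s)`. All factors but the last are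
positive, and `s · artanh s` is strictly increasing in `β`, so the sign of `Λ'` changes exactly at
the root `β₁`.
-/

noncomputable def artanh (x : ℝ) : ℝ := (1 / 2) * Real.log ((1 + x) / (1 - x))

noncomputable def eta (β : ℝ) : ℝ := Real.sqrt 2 * artanh (Real.sqrt (1 - Real.exp (-β)))

noncomputable def Lam (α β : ℝ) : ℝ := (1 - α) ^ (-2 : ℤ) * Real.exp (-β) * (eta β) ^ 2

open Set

section Artanh

variable {x y : ℝ}

theorem artanh_eq_real_artanh (hx : x ∈ Icc (-1) 1) : artanh x = Real.artanh x :=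
  (Real.artanh_eq_half_log hx).symm

theorem artanh_pos (hx : x ∈ Ioo 0 1) : 0 < artanh x := by
  rw [artanh_eq_real_artanh ⟨by linarith [hx.1], hx.2.le⟩]
  exact Real.artanh_pos hx

theorem artanh_lt_artanh (hx : -1 < x) (hy : y < 1) (hxy : x < y) : artanh x < artanh y := by
  rw [artanh_eq_real_artanh ⟨hx.le, by linarith⟩, artanh_eq_real_artanh ⟨by linarith, hy.le⟩]
  exact Real.artanh_lt_artanh hx hy hxy

theorem hasDerivAt_artanh (hx : x ∈ Ioo (-1) 1) : HasDerivAt artanh (1 / (1 - x ^ 2)) x := by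
  obtain ⟨hx₀, hx₁⟩ := hx
  have hsub : (1 : ℝ) - x ≠ 0 := by linarith
  have hquot : HasDerivAt (fun y ↦ (1 + y) / (1 - y)) ((1 * (1 - x) - (1 + x) * (-1)) / (1 - x) ^ 2) x :=
    ((hasDerivAt_id x).const_add 1).div ((hasDerivAt_id x).const_sub 1) hsub
  have hquot_pos : 0 < (1 + x) / (1 - x) := div_pos (by linarith) (by linarith)
  refine ((hquot.log hquot_pos.ne').const_mul (1 / 2)).congr_deriv ?_
  have hadd : (1 : ℝ) + x ≠ 0 := by linarith
  rw [show (1 : ℝ) - x ^ 2 = (1 + x) * (1 - x) by ring]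
  field_simp
  ring

theorem strictMonoOn_mul_artanh : StrictMonoOn (fun x ↦ x * artanh x) (Ico 0 1) := by
  intro x ⟨hx₀, _⟩ y ⟨_, hy₁⟩ hxy
  have hx : 0 ≤ artanh x := by
    rw [artanh_eq_real_artanh ⟨by linarith, by linarith⟩]
    exact Real.artanh_nonneg hx₀
  have hy : 0 < artanh y := artanh_pos ⟨by linarith, hy₁⟩
  have hxy' : artanh x < artanh y := artanh_lt_artanh (by linarith) hy₁ hxy
  dsimp only
  nlinarith

end Artanh

noncomputable def sqrtOneSubExpNeg (β : ℝ) : ℝ := Real.sqrt (1 - Real.exp (-β))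

section SqrtOneSubExpNeg

variable {β : ℝ}

theorem one_sub_sq_sqrtOneSubExpNeg (hβ : 0 ≤ β) : 1 - sqrtOneSubExpNeg β ^ 2 = Real.exp (-β) := by
  have : Real.exp (-β) ≤ 1 := Real.exp_le_one_iff.mpr (by linarith)
  rw [sqrtOneSubExpNeg, Real.sq_sqrt (by linarith)]
  ring

theorem sqrtOneSubExpNeg_mem_Ico (β : ℝ) : sqrtOneSubExpNeg β ∈ Ico 0 1 := by
  refine ⟨Real.sqrt_nonneg _, ?_⟩
  rw [sqrtOneSubExpNeg, Real.sqrt_lt' one_pos]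
  linarith [Real.exp_pos (-β)]

theorem sqrtOneSubExpNeg_pos (hβ : 0 < β) : 0 < sqrtOneSubExpNeg β :=
  Real.sqrt_pos.mpr (by linarith [Real.exp_lt_one_iff.mpr (neg_lt_zero.mpr hβ)])

theorem strictMonoOn_sqrtOneSubExpNeg : StrictMonoOn sqrtOneSubExpNeg (Ici 0) := by
  intro β hβ β' _ hββ'
  have : Real.exp (-β') < Real.exp (-β) := Real.exp_lt_exp.mpr (by linarith)
  have : Real.exp (-β) ≤ 1 := Real.exp_le_one_iff.mpr (by simpa using hβ)
  exact Real.sqrt_lt_sqrt (by linarith) (by linarith)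

theorem strictMonoOn_sqrtOneSubExpNeg_mul_artanh :
    StrictMonoOn (fun β ↦ sqrtOneSubExpNeg β * artanh (sqrtOneSubExpNeg β)) (Ici 0) :=
  strictMonoOn_mul_artanh.comp strictMonoOn_sqrtOneSubExpNeg fun β _ ↦ sqrtOneSubExpNeg_mem_Ico β

theorem hasDerivAt_artanh_sqrtOneSubExpNeg (hβ : 0 < β) :
    HasDerivAt (fun b ↦ artanh (sqrtOneSubExpNeg b)) (1 / (2 * sqrtOneSubExpNeg β)) β := by
  have hs := sqrtOneSubExpNeg_pos hβ
  have hsq := one_sub_sq_sqrtOneSubExpNeg hβ.le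
  have hexp : HasDerivAt (fun b ↦ 1 - Real.exp (-b)) (Real.exp (-β)) β := by
    simpa using (hasDerivAt_neg β).exp.const_sub 1
  have hsqrt : HasDerivAt sqrtOneSubExpNeg (1 / (2 * sqrtOneSubExpNeg β) * Real.exp (-β)) β :=
    (Real.hasDerivAt_sqrt (Real.sqrt_pos.mp hs).ne').comp β hexp
  have hmem : sqrtOneSubExpNeg β ∈ Ioo (-1) 1 :=
    ⟨by linarith, (sqrtOneSubExpNeg_mem_Ico β).2⟩
  refine ((hasDerivAt_artanh hmem).comp β hsqrt).congr_deriv ?_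
  rw [hsq]
  field_simp [(Real.exp_pos (-β)).ne']

end SqrtOneSubExpNeg

theorem hasDerivAt_Lam (α : ℝ) {β : ℝ} (hβ : 0 < β) :
    HasDerivAt (Lam α)
      ((1 - α) ^ (-2 : ℤ) * 2 * Real.exp (-β) *
        (artanh (sqrtOneSubExpNeg β) / sqrtOneSubExpNeg β) *
        (1 - sqrtOneSubExpNeg β * artanh (sqrtOneSubExpNeg β))) β := by
  have hs := (sqrtOneSubExpNeg_pos hβ).ne'
  have hexp : HasDerivAt (fun b ↦ Real.exp (-b)) (-Real.exp (-β)) β := by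
    simpa using (hasDerivAt_neg β).exp
  have heta : HasDerivAt eta (Real.sqrt 2 * (1 / (2 * sqrtOneSubExpNeg β))) β :=
    (hasDerivAt_artanh_sqrtOneSubExpNeg hβ).const_mul _
  refine ((hexp.const_mul _).mul (heta.fun_pow 2)).congr_deriv ?_
  have h2 : Real.sqrt 2 ^ 2 = 2 := Real.sq_sqrt zero_le_two
  have heta_eq : eta β = Real.sqrt 2 * artanh (sqrtOneSubExpNeg β) := rfl
  rw [heta_eq]
  linear_combination (norm := skip) (1 - α) ^ (-2 : ℤ) * Real.exp (-β) *
    (artanh (sqrtOneSubExpNeg β) / sqrtOneSubExpNeg β - artanh (sqrtOneSubExpNeg β) ^ 2) * h2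
  field_simp
  ring

theorem exists_pos_deriv_Lam_eq {α β : ℝ} (hα : α ≠ 1) (hβ : 0 < β) :
    ∃ K > 0, deriv (Lam α) β = K * (1 - sqrtOneSubExpNeg β * artanh (sqrtOneSubExpNeg β)) := by
  have hs := sqrtOneSubExpNeg_pos hβ
  have hA := artanh_pos ⟨hs, (sqrtOneSubExpNeg_mem_Ico β).2⟩
  have hc : 1 - α ≠ 0 := sub_ne_zero.mpr hα.symm
  exact ⟨_, by positivity, (hasDerivAt_Lam α hβ).deriv⟩

theorem stmt_6 (α : ℝ) (hα : 0 < α ∧ α < 1) (β₁ : ℝ) (hβ₁ : 0 < β₁)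
    (hroot : Real.sqrt (1 - Real.exp (-β₁)) * artanh (Real.sqrt (1 - Real.exp (-β₁))) = 1) :
    (∀ β : ℝ, 0 < β → β < β₁ → 0 < deriv (Lam α) β) ∧
    deriv (Lam α) β₁ = 0 ∧
    (∀ β : ℝ, β₁ < β → deriv (Lam α) β < 0) := by
  have hα₁ : α ≠ 1 := hα.2.ne
  have hroot : sqrtOneSubExpNeg β₁ * artanh (sqrtOneSubExpNeg β₁) = 1 := hroot
  have hmono := strictMonoOn_sqrtOneSubExpNeg_mul_artanh
  refine ⟨fun β hβ hββ₁ ↦ ?_, ?_, fun β hβ₁β ↦ ?_⟩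
  · obtain ⟨K, hK, hderiv⟩ := exists_pos_deriv_Lam_eq hα₁ hβ
    have := hmono (mem_Ici.mpr hβ.le) (mem_Ici.mpr hβ₁.le) hββ₁
    rw [hderiv]
    exact mul_pos hK (by simp only at this; linarith)
  · obtain ⟨K, -, hderiv⟩ := exists_pos_deriv_Lam_eq hα₁ hβ₁
    rw [hderiv, hroot, sub_self, mul_zero]
  · have hβ : 0 < β := hβ₁.trans hβ₁β
    obtain ⟨K, hK, hderiv⟩ := exists_pos_deriv_Lam_eq hα₁ hβ
    have := hmono (mem_Ici.mpr hβ₁.le) (mem_Ici.mpr hβ.le) hβ₁β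
    rw [hderiv]
    exact mul_neg_of_pos_of_neg hK (by simp only at this; linarith)
end

section
/- Let 0 < α < 1 and λ > 0, with h(x,α) = 0 for |x| < α and 1 for α ≤ |x| ≤ 1. Then the boundary value problem u'' + λ h(x,α) e^u = 0 on (-1,1), u(-1) = u(1) = 0, has at most one positive solution u with ‖u‖_∞ ≤ 1. -/
open Set Filter Topology Real

/-!
Suppose `v < u` somewhere and let `(a, b)` be a maximal interval on which `v < u`, so that
`u = v` at `a` and `b`. The Wronskian `W = u v' - v u'` satisfies
`W' = λ h (v eᵘ - u eᵛ)`, which is `≤ 0` on `(a, b)` because `t ↦ eᵗ / t` is decreasing on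
`(0, 1]`; hence `W` is antitone on `[a, b]`. At the endpoints `W = u (v' - u')` has sign
`W(a) ≤ 0 ≤ W(b)`, so `W ≡ 0` on `[a, b]`. If `(a, b)` reaches into `|x| > α`, then `W' < 0`
there, a contradiction; otherwise `b ≤ α < 1`, so `u(b) > 0` and `(v / u)' = W / u² = 0` forces
`v / u = v(b) / u(b) = 1` on `(a, b]`, again a contradiction.
-/

noncomputable def step (α x : ℝ) : ℝ := if |x| < α then 0 else 1

def IsSolution (α lam : ℝ) (u : ℝ → ℝ) : Prop :=
  ContinuousOn u (Icc (-1) 1) ∧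
  (∀ x ∈ Ioo (-1 : ℝ) 1, DifferentiableAt ℝ u x) ∧
  ContinuousOn (deriv u) (Icc (-1) 1) ∧
  (∀ x ∈ Ioo (-1 : ℝ) 1 \ {-α, α}, DifferentiableAt ℝ (deriv u) x ∧
    deriv (deriv u) x + lam * step α x * Real.exp (u x) = 0) ∧
  u (-1) = 0 ∧ u 1 = 0

theorem strictAntiOn_exp_div_self : StrictAntiOn (fun x => exp x / x) (Ioc 0 1) := by
  apply strictAntiOn_of_deriv_neg (convex_Ioc 0 1)
  · exact continuousOn_exp.div continuousOn_id fun x hx => hx.1.ne'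
  · intro x hx
    rw [interior_Ioc] at hx
    have hd : HasDerivAt (fun x => exp x / x) ((exp x * x - exp x * 1) / x ^ 2) x :=
      (hasDerivAt_exp x).div (hasDerivAt_id x) hx.1.ne'
    rw [hd.deriv]
    apply div_neg_of_neg_of_pos
    · nlinarith [exp_pos x, hx.2]
    · exact pow_pos hx.1 2

theorem mul_exp_lt_mul_exp {s t : ℝ} (hs : 0 < s) (hst : s < t) (ht : t ≤ 1) :
    s * exp t < t * exp s := by
  have h := strictAntiOn_exp_div_self ⟨hs, hst.le.trans ht⟩ ⟨hs.trans hst, ht⟩ hst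
  rw [div_lt_div_iff₀ (hs.trans hst) hs] at h
  linarith

theorem exists_zero_left_of_pos {f : ℝ → ℝ} {l x₀ : ℝ} (hf : ContinuousOn f (Icc l x₀))
    (hl : f l = 0) (hlx₀ : l ≤ x₀) (hx₀ : 0 < f x₀) :
    ∃ a ∈ Ico l x₀, f a = 0 ∧ ∀ x ∈ Ioc a x₀, 0 < f x := by
  set S := Icc l x₀ ∩ f ⁻¹' {0}
  have hbdd : BddAbove S := bddAbove_Icc.mono inter_subset_left
  have haS : sSup S ∈ S :=
    (hf.preimage_isClosed_of_isClosed isClosed_Icc isClosed_singleton).csSup_mem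
      ⟨l, ⟨le_rfl, hlx₀⟩, hl⟩ hbdd
  obtain ⟨⟨hla, hax₀⟩, hfa⟩ := haS
  refine ⟨sSup S, ⟨hla, hax₀.lt_of_ne ?_⟩, hfa, fun x hx => ?_⟩
  · intro h
    rw [h] at hfa
    exact hx₀.ne' hfa
  · by_contra! hfx
    obtain ⟨z, hz, hfz⟩ := intermediate_value_Icc hx.2
      (hf.mono (Icc_subset_Icc (hla.trans hx.1.le) le_rfl)) ⟨hfx, hx₀.le⟩
    exact (le_csSup hbdd ⟨⟨hla.trans (hx.1.le.trans hz.1), hz.2⟩, hfz⟩).not_gt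
      (hx.1.trans_le hz.1)

theorem exists_zero_right_of_pos {f : ℝ → ℝ} {x₀ r : ℝ} (hf : ContinuousOn f (Icc x₀ r))
    (hr : f r = 0) (hx₀r : x₀ ≤ r) (hx₀ : 0 < f x₀) :
    ∃ b ∈ Ioc x₀ r, f b = 0 ∧ ∀ x ∈ Ico x₀ b, 0 < f x := by
  have hf' : ContinuousOn (fun x => f (-x)) (Icc (-r) (-x₀)) :=
    hf.comp continuousOn_neg fun x hx => ⟨le_neg.1 hx.2, neg_le.1 hx.1⟩
  obtain ⟨a, ha, hfa, hpos⟩ := exists_zero_left_of_pos hf' (by simpa) (neg_le_neg hx₀r)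
    (by simpa)
  refine ⟨-a, ⟨lt_neg.1 ha.2, neg_le.1 ha.1⟩, hfa, fun x hx => ?_⟩
  simpa using hpos (-x) ⟨lt_neg.1 hx.2, neg_le_neg hx.1⟩

theorem exists_Ioo_pos_of_continuousOn {f : ℝ → ℝ} {l r x₀ : ℝ}
    (hf : ContinuousOn f (Icc l r)) (hl : f l = 0) (hr : f r = 0) (hx₀ : x₀ ∈ Icc l r)
    (hfx₀ : 0 < f x₀) :
    ∃ a b, l ≤ a ∧ a < x₀ ∧ x₀ < b ∧ b ≤ r ∧ f a = 0 ∧ f b = 0 ∧ ∀ x ∈ Ioo a b, 0 < f x := by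
  obtain ⟨a, ha, hfa, hleft⟩ :=
    exists_zero_left_of_pos (hf.mono (Icc_subset_Icc le_rfl hx₀.2)) hl hx₀.1 hfx₀
  obtain ⟨b, hb, hfb, hright⟩ :=
    exists_zero_right_of_pos (hf.mono (Icc_subset_Icc hx₀.1 le_rfl)) hr hx₀.2 hfx₀
  refine ⟨a, b, ha.1, ha.2, hb.1, hb.2, hfa, hfb, fun x hx => ?_⟩
  rcases le_or_gt x x₀ with hxx₀ | hx₀x
  · exact hleft x ⟨hx.1, hxx₀⟩
  · exact hright x ⟨hx₀x.le, hx.2⟩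

theorem hasDerivWithinAt_Ici_of_continuousOn_deriv {f : ℝ → ℝ} {l r a : ℝ}
    (hf : ContinuousOn f (Icc l r)) (hdiff : ∀ x ∈ Ioo l r, DifferentiableAt ℝ f x)
    (hf' : ContinuousOn (deriv f) (Icc l r)) (ha : a ∈ Ico l r) :
    HasDerivWithinAt f (deriv f a) (Ici a) a := by
  have hsub : Ioo a r ⊆ Icc l r := Ioo_subset_Icc_self.trans (Icc_subset_Icc ha.1 le_rfl)
  have hlim := (hf' a (Ico_subset_Icc_self ha)).mono hsub
  rw [ContinuousWithinAt, nhdsWithin_Ioo_eq_nhdsGT ha.2] at hlim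
  exact hasDerivWithinAt_Ici_of_tendsto_deriv
    (fun x hx => (hdiff x ⟨ha.1.trans_lt hx.1, hx.2⟩).differentiableWithinAt)
    ((hf a (Ico_subset_Icc_self ha)).mono hsub) (Ioo_mem_nhdsGT ha.2) hlim

theorem hasDerivWithinAt_Iic_of_continuousOn_deriv {f : ℝ → ℝ} {l r b : ℝ}
    (hf : ContinuousOn f (Icc l r)) (hdiff : ∀ x ∈ Ioo l r, DifferentiableAt ℝ f x)
    (hf' : ContinuousOn (deriv f) (Icc l r)) (hb : b ∈ Ioc l r) :
    HasDerivWithinAt f (deriv f b) (Iic b) b := by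
  have hsub : Ioo l b ⊆ Icc l r := Ioo_subset_Icc_self.trans (Icc_subset_Icc le_rfl hb.2)
  have hlim := (hf' b (Ioc_subset_Icc_self hb)).mono hsub
  rw [ContinuousWithinAt, nhdsWithin_Ioo_eq_nhdsLT hb.1] at hlim
  exact hasDerivWithinAt_Iic_of_tendsto_deriv
    (fun x hx => (hdiff x ⟨hx.1, hx.2.trans_le hb.2⟩).differentiableWithinAt)
    ((hf b (Ioc_subset_Icc_self hb)).mono hsub) (Ioo_mem_nhdsLT hb.1) hlim

theorem HasDerivWithinAt.nonneg_of_le_right {f : ℝ → ℝ} {f' a : ℝ}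
    (hd : HasDerivWithinAt f f' (Ici a) a) (hf : ∀ᶠ x in 𝓝[>] a, f a ≤ f x) : 0 ≤ f' := by
  refine ge_of_tendsto ((hasDerivWithinAt_iff_tendsto_slope' self_notMem_Ioi).mp hd.Ioi_of_Ici) ?_
  filter_upwards [hf, self_mem_nhdsWithin] with x hfx hx
  rw [slope_def_field]
  exact div_nonneg (sub_nonneg.2 hfx) (sub_nonneg.2 (le_of_lt hx))

theorem HasDerivWithinAt.nonpos_of_le_left {f : ℝ → ℝ} {f' b : ℝ}
    (hd : HasDerivWithinAt f f' (Iic b) b) (hf : ∀ᶠ x in 𝓝[<] b, f b ≤ f x) : f' ≤ 0 := by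
  refine le_of_tendsto ((hasDerivWithinAt_iff_tendsto_slope' self_notMem_Iio).mp hd.Iio_of_Iic) ?_
  filter_upwards [hf, self_mem_nhdsWithin] with x hfx hx
  rw [slope_def_field]
  exact div_nonpos_of_nonneg_of_nonpos (sub_nonneg.2 hfx) (sub_nonpos.2 (le_of_lt hx))

theorem antitoneOn_of_hasDerivAt_nonpos_off_finite {f f' : ℝ → ℝ} {s : Set ℝ} (hs : s.Finite)
    {a b : ℝ} (hf : ContinuousOn f (Icc a b))
    (hderiv : ∀ x ∈ Ioo a b \ s, HasDerivAt f (f' x) x) (hf' : ∀ x ∈ Ioo a b \ s, f' x ≤ 0) :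
    AntitoneOn f (Icc a b) := by
  induction s, hs using Set.Finite.induction_on generalizing a b with
  | empty =>
    simp only [sdiff_empty] at hderiv hf'
    refine antitoneOn_of_hasDerivWithinAt_nonpos (convex_Icc a b) hf (fun x hx => ?_)
      (fun x hx => hf' x (by rwa [interior_Icc] at hx))
    rw [interior_Icc] at hx ⊢
    exact (hderiv x hx).hasDerivWithinAt
  | @insert p s _ _ ih =>
    by_cases hp : p ∈ Ioo a b
    · have hleft : AntitoneOn f (Icc a p) :=
        ih (hf.mono (Icc_subset_Icc le_rfl hp.2.le))
          (fun x hx => hderiv x ⟨⟨hx.1.1, hx.1.2.trans hp.2⟩, by simp [hx.1.2.ne, hx.2]⟩)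
          (fun x hx => hf' x ⟨⟨hx.1.1, hx.1.2.trans hp.2⟩, by simp [hx.1.2.ne, hx.2]⟩)
      have hright : AntitoneOn f (Icc p b) :=
        ih (hf.mono (Icc_subset_Icc hp.1.le le_rfl))
          (fun x hx => hderiv x ⟨⟨hp.1.trans hx.1.1, hx.1.2⟩, by simp [hx.1.1.ne', hx.2]⟩)
          (fun x hx => hf' x ⟨⟨hp.1.trans hx.1.1, hx.1.2⟩, by simp [hx.1.1.ne', hx.2]⟩)
      rw [← Icc_union_Icc_eq_Icc hp.1.le hp.2.le]
      exact hleft.union_right hright (isGreatest_Icc hp.1.le) (isLeast_Icc hp.2.le)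
    · have hsub : Ioo a b \ s ⊆ Ioo a b \ insert p s := fun x hx =>
        ⟨hx.1, by rintro (rfl | h); exacts [hp hx.1, hx.2 h]⟩
      exact ih hf (fun x hx => hderiv x (hsub hx)) (fun x hx => hf' x (hsub hx))

noncomputable def wronskian (u v : ℝ → ℝ) (x : ℝ) : ℝ := u x * deriv v x - v x * deriv u x

theorem wronskian_eq_mul_of_eq {u v : ℝ → ℝ} {x : ℝ} (h : u x = v x) :
    wronskian u v x = u x * (deriv v x - deriv u x) := by
  rw [wronskian, ← h]
  ring

theorem hasDerivAt_wronskian {u v : ℝ → ℝ} {x : ℝ} (hu : DifferentiableAt ℝ u x)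
    (hv : DifferentiableAt ℝ v x) (hu' : DifferentiableAt ℝ (deriv u) x)
    (hv' : DifferentiableAt ℝ (deriv v) x) :
    HasDerivAt (wronskian u v) (u x * deriv (deriv v) x - v x * deriv (deriv u) x) x :=
  ((hu.hasDerivAt.mul hv'.hasDerivAt).sub (hv.hasDerivAt.mul hu'.hasDerivAt)).congr_deriv
    (by ring)

theorem div_eq_div_of_wronskian_eq_zero {u v : ℝ → ℝ} {s t : ℝ} (hst : s < t)
    (hu : ContinuousOn u (Icc s t)) (hv : ContinuousOn v (Icc s t))
    (hdu : ∀ x ∈ Ioo s t, DifferentiableAt ℝ u x) (hdv : ∀ x ∈ Ioo s t, DifferentiableAt ℝ v x)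
    (hpos : ∀ x ∈ Icc s t, 0 < u x) (hW : ∀ x ∈ Ioo s t, wronskian u v x = 0) :
    v t / u t = v s / u s := by
  have hderiv : ∀ x ∈ Ioo s t, HasDerivAt (fun x => v x / u x) 0 x := fun x hx => by
    have hux := (hpos x (Ioo_subset_Icc_self hx)).ne'
    refine ((hdv x hx).hasDerivAt.div (hdu x hx).hasDerivAt hux).congr_deriv ?_
    rw [div_eq_zero_iff, sub_eq_zero, mul_comm]
    exact Or.inl (sub_eq_zero.1 (hW x hx))
  obtain ⟨c, -, hc⟩ := exists_hasDerivAt_eq_slope _ _ hst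
    (hv.div hu fun x hx => (hpos x hx).ne') hderiv
  rw [eq_comm, div_eq_zero_iff, sub_eq_zero] at hc
  exact hc.resolve_right (sub_pos.2 hst).ne'

theorem step_nonneg (α x : ℝ) : 0 ≤ step α x := by
  unfold step
  split <;> norm_num

theorem step_eq_one {α x : ℝ} (h : α ≤ |x|) : step α x = 1 :=
  if_neg h.not_gt

namespace IsSolution

variable {α lam : ℝ} {u v : ℝ → ℝ}

theorem hasDerivWithinAt_Ici (hu : IsSolution α lam u) {a : ℝ} (ha : a ∈ Ico (-1) 1) :
    HasDerivWithinAt u (deriv u a) (Ici a) a :=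
  hasDerivWithinAt_Ici_of_continuousOn_deriv hu.1 hu.2.1 hu.2.2.1 ha

theorem hasDerivWithinAt_Iic (hu : IsSolution α lam u) {b : ℝ} (hb : b ∈ Ioc (-1) 1) :
    HasDerivWithinAt u (deriv u b) (Iic b) b :=
  hasDerivWithinAt_Iic_of_continuousOn_deriv hu.1 hu.2.1 hu.2.2.1 hb

theorem nonneg_of_pos (hv : IsSolution α lam v) (hvpos : ∀ x ∈ Ioo (-1 : ℝ) 1, 0 < v x) :
    ∀ x ∈ Icc (-1 : ℝ) 1, 0 ≤ v x := by
  intro x hx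
  rcases hx.1.eq_or_lt with rfl | hx₁
  · exact hv.2.2.2.2.1.ge
  rcases hx.2.eq_or_lt with rfl | hx₂
  · exact hv.2.2.2.2.2.ge
  exact (hvpos x ⟨hx₁, hx₂⟩).le

theorem hasDerivAt_wronskian (hu : IsSolution α lam u) (hv : IsSolution α lam v) {x : ℝ}
    (hx : x ∈ Ioo (-1 : ℝ) 1 \ {-α, α}) :
    HasDerivAt (wronskian u v) (lam * step α x * (v x * exp (u x) - u x * exp (v x))) x := by
  obtain ⟨hu', hu''⟩ := hu.2.2.2.1 x hx
  obtain ⟨hv', hv''⟩ := hv.2.2.2.1 x hx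
  refine (_root_.hasDerivAt_wronskian (hu.2.1 x hx.1) (hv.2.1 x hx.1) hu' hv').congr_deriv ?_
  linear_combination u x * hv'' - v x * hu''

theorem wronskian_eq_zero (hlam : 0 ≤ lam) (hu : IsSolution α lam u) (hv : IsSolution α lam v)
    {a b : ℝ} (ha : -1 ≤ a) (hab : a < b) (hb : b ≤ 1) (hua : u a = v a) (hub : u b = v b)
    (hua₀ : 0 ≤ u a) (hub₀ : 0 ≤ u b) (hgap : ∀ x ∈ Ioo a b, v x < u x)
    (hexp : ∀ x ∈ Ioo a b, v x * exp (u x) ≤ u x * exp (v x)) :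
    ∀ x ∈ Icc a b, wronskian u v x = 0 := by
  have hanti : AntitoneOn (wronskian u v) (Icc a b) := by
    refine antitoneOn_of_hasDerivAt_nonpos_off_finite (toFinite {-α, α})
      (((hu.1.mul hv.2.2.1).sub (hv.1.mul hu.2.2.1)).mono (Icc_subset_Icc ha hb))
      (fun x hx => hu.hasDerivAt_wronskian hv ⟨⟨ha.trans_lt hx.1.1, hx.1.2.trans_le hb⟩, hx.2⟩)
      (fun x hx => mul_nonpos_of_nonneg_of_nonpos (mul_nonneg hlam (step_nonneg α x))
        (sub_nonpos.2 (hexp x hx.1)))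
  have hWa : wronskian u v a ≤ 0 := by
    have hd := (hu.hasDerivWithinAt_Ici ⟨ha, hab.trans_le hb⟩).sub
      (hv.hasDerivWithinAt_Ici ⟨ha, hab.trans_le hb⟩)
    have := hd.nonneg_of_le_right (by
      filter_upwards [Ioo_mem_nhdsGT hab] with x hx
      simpa [hua] using (hgap x hx).le)
    rw [wronskian_eq_mul_of_eq hua]
    nlinarith
  have hWb : 0 ≤ wronskian u v b := by
    have hd := (hu.hasDerivWithinAt_Iic ⟨ha.trans_lt hab, hb⟩).sub
      (hv.hasDerivWithinAt_Iic ⟨ha.trans_lt hab, hb⟩)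
    have := hd.nonpos_of_le_left (by
      filter_upwards [Ioo_mem_nhdsLT hab] with x hx
      simpa [hub] using (hgap x hx).le)
    rw [wronskian_eq_mul_of_eq hub]
    nlinarith
  intro x hx
  have hax := hanti ⟨le_rfl, hab.le⟩ hx hx.1
  have hxb := hanti hx ⟨hab.le, le_rfl⟩ hx.2
  linarith

theorem wronskian_not_eventuallyEq_zero (hα : 0 < α) (hlam : 0 < lam) (hu : IsSolution α lam u)
    (hv : IsSolution α lam v) {x : ℝ} (hx : x ∈ Ioo (-1 : ℝ) 1) (hαx : α < |x|)
    (hexp : v x * exp (u x) < u x * exp (v x)) : ¬ wronskian u v =ᶠ[𝓝 x] 0 := by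
  intro hW
  have hx' : x ∉ ({-α, α} : Set ℝ) := by
    rintro (rfl | rfl) <;> simp [abs_of_pos hα] at hαx
  have hderiv := hu.hasDerivAt_wronskian hv ⟨hx, hx'⟩
  rw [step_eq_one hαx.le, mul_one] at hderiv
  exact (mul_neg_of_pos_of_neg hlam (sub_neg.2 hexp)).ne
    (hderiv.unique ((hasDerivAt_const x 0).congr_of_eventuallyEq hW))

theorem le_of_pos_of_le_one (hα : 0 < α ∧ α < 1) (hlam : 0 < lam)
    (hu : IsSolution α lam u) (hv : IsSolution α lam v)
    (hvpos : ∀ x ∈ Ioo (-1 : ℝ) 1, 0 < v x) (hu1 : ∀ x ∈ Ioo (-1 : ℝ) 1, u x ≤ 1) :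
    ∀ x ∈ Icc (-1 : ℝ) 1, u x ≤ v x := by
  by_contra! ⟨x₀, hx₀, hvu⟩
  obtain ⟨a, b, ha, hax₀, hx₀b, hb, hua, hub, hgap⟩ :=
    exists_Ioo_pos_of_continuousOn (hu.1.sub hv.1) (by simp [hu.2.2.2.2.1, hv.2.2.2.2.1])
      (by simp [hu.2.2.2.2.2, hv.2.2.2.2.2]) hx₀ (sub_pos.2 hvu)
  simp only [Pi.sub_apply, sub_eq_zero, sub_pos] at hua hub hgap
  have hsub : Ioo a b ⊆ Ioo (-1) 1 := Ioo_subset_Ioo ha hb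
  have hexp : ∀ x ∈ Ioo a b, v x * exp (u x) < u x * exp (v x) := fun x hx =>
    mul_exp_lt_mul_exp (hvpos x (hsub hx)) (hgap x hx) (hu1 x (hsub hx))
  have hv₀ := hv.nonneg_of_pos hvpos
  have hW := hu.wronskian_eq_zero hlam.le hv ha (hax₀.trans hx₀b) hb hua hub
    (hua ▸ hv₀ a ⟨ha, by linarith⟩) (hub ▸ hv₀ b ⟨by linarith, hb⟩) hgap fun x hx => (hexp x hx).le
  rcases lt_or_ge α b with hαb | hbα
  · obtain ⟨x, hx⟩ : (Ioo (max a α) b).Nonempty := nonempty_Ioo.2 (max_lt (hax₀.trans hx₀b) hαb)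
    have hxab : x ∈ Ioo a b := ⟨(le_max_left _ _).trans_lt hx.1, hx.2⟩
    refine hu.wronskian_not_eventuallyEq_zero hα.1 hlam hv (hsub hxab)
      (((le_max_right _ _).trans_lt hx.1).trans_le (le_abs_self x)) (hexp x hxab) ?_
    filter_upwards [Ioo_mem_nhds hxab.1 hxab.2] with y hy
    exact hW y (Ioo_subset_Icc_self hy)
  · have hb₀ : 0 < u b := hub ▸ hvpos b ⟨by linarith [hx₀.1], by linarith [hα.2]⟩
    have hupos : ∀ x ∈ Icc x₀ b, 0 < u x := fun x hx => hx.2.eq_or_lt.elim (· ▸ hb₀)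
      fun hxb => (hvpos x (hsub ⟨hax₀.trans_le hx.1, hxb⟩)).trans (hgap x ⟨hax₀.trans_le hx.1, hxb⟩)
    have hratio := div_eq_div_of_wronskian_eq_zero hx₀b
      (hu.1.mono (Icc_subset_Icc hx₀.1 hb)) (hv.1.mono (Icc_subset_Icc hx₀.1 hb))
      (fun x hx => hu.2.1 x (hsub ⟨hax₀.trans hx.1, hx.2⟩))
      (fun x hx => hv.2.1 x (hsub ⟨hax₀.trans hx.1, hx.2⟩))
      hupos (fun x hx => hW x ⟨(hax₀.trans hx.1).le, hx.2.le⟩)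
    rw [← hub, div_self hb₀.ne', eq_comm,
      div_eq_one_iff_eq (hupos x₀ ⟨le_rfl, hx₀b.le⟩).ne'] at hratio
    exact hvu.ne hratio

end IsSolution

theorem stmt_14 (α lam : ℝ) (hα : 0 < α ∧ α < 1) (hlam : 0 < lam) (u v : ℝ → ℝ)
    (hu : IsSolution α lam u) (hupos : ∀ x ∈ Ioo (-1 : ℝ) 1, 0 < u x)
    (hub : ∀ x ∈ Icc (-1 : ℝ) 1, |u x| ≤ 1)
    (hv : IsSolution α lam v) (hvpos : ∀ x ∈ Ioo (-1 : ℝ) 1, 0 < v x)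
    (hvb : ∀ x ∈ Icc (-1 : ℝ) 1, |v x| ≤ 1) :
    ∀ x ∈ Icc (-1 : ℝ) 1, u x = v x := by
  have hle_one {w : ℝ → ℝ} (hw : ∀ x ∈ Icc (-1 : ℝ) 1, |w x| ≤ 1) :
      ∀ x ∈ Ioo (-1 : ℝ) 1, w x ≤ 1 := fun x hx => (abs_le.1 (hw x (Ioo_subset_Icc_self hx))).2
  intro x hx
  exact le_antisymm (hu.le_of_pos_of_le_one hα hlam hv hvpos (hle_one hub) x hx)
    (hv.le_of_pos_of_le_one hα hlam hu hupos (hle_one hvb) x hx)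
end
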